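/- arXiv:1811.02053 — 5 statements merged into one kernel-verified Lean document; each statement's English description precedes it below -/
import Mathlib

section
/- Let B = 2m with m ≥ 1 an integer, and let SM : {0,1}^{2m} → ℤ × ℤ be the set-partitioned QAM mapping SM(c) = (Σ_{k=1}^{m} (2(c_{2k−1} ⊕ c_{2k}) − 1)·2^{k−1}, Σ_{k=1}^{m} (2c_{2k} − 1)·2^{k−1}). Then for every integer n with 0 ≤ n ≤ 2m and every pair of distinct bit strings c, c' ∈ {0,1}^{2m} satisfying c_i = c'_i for all 1 ≤ i ≤ n, the squared Euclidean distance between SM(c) and SM(c') is at least 2^{n+2}. (That is, the mapping is a set-partitioning mapping: fixing the first n bits yields a subset whose minimum Euclidean distance is at least 2·(√2)^n.) -/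
/-- In-phase (I) component of the set-partitioned QAM mapping.
Bits are 0-indexed: `c i` is the paper's bit `c_{i+1}`. -/
def qamI (m : ℕ) (c : ℕ → Bool) : ℤ :=
  ∑ k ∈ Finset.range m,
    (2 * (if Bool.xor (c (2*k)) (c (2*k+1)) then (1:ℤ) else 0) - 1) * 2^k

/-- Quadrature (Q) component of the set-partitioned QAM mapping. -/
def qamQ (m : ℕ) (c : ℕ → Bool) : ℤ :=
  ∑ k ∈ Finset.range m,
    (2 * (if c (2*k+1) then (1:ℤ) else 0) - 1) * 2^k

/-- Per-coordinate I difference coefficient. -/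
def qdI (c c' : ℕ → Bool) (l : ℕ) : ℤ :=
  (if Bool.xor (c (2*l)) (c (2*l+1)) then (1:ℤ) else 0) -
  (if Bool.xor (c' (2*l)) (c' (2*l+1)) then (1:ℤ) else 0)

/-- Per-coordinate Q difference coefficient. -/
def qdQ (c c' : ℕ → Bool) (l : ℕ) : ℤ :=
  (if c (2*l+1) then (1:ℤ) else 0) - (if c' (2*l+1) then (1:ℤ) else 0)

lemma ite_sub_ne (p q : Bool) (h : p ≠ q) :
    (if p then (1:ℤ) else 0) - (if q then 1 else 0) ≠ 0 := by
  cases p <;> cases q <;> simp_all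

lemma key_sq (m k : ℕ) (hk : k < m) (f : ℕ → ℤ)
    (hf : ∀ l, f l = 1 ∨ f l = 0 ∨ f l = -1)
    (h0 : ∀ l, l < k → f l = 0) (hk0 : f k ≠ 0) :
    ((2:ℤ)^k)^2 ≤ (∑ l ∈ Finset.range m, f l * 2^l)^2 := by
  set S := ∑ l ∈ Finset.range m, f l * 2^l with hS
  have hdvd : (2:ℤ)^k ∣ S := by
    apply Finset.dvd_sum
    intro l hl
    by_cases h : l < k
    · rw [h0 l h]; simp
    · exact dvd_mul_of_dvd_right (pow_dvd_pow 2 (not_lt.mp h)) _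
  have hmem : k ∈ Finset.range m := Finset.mem_range.mpr hk
  have hsplit : S = f k * 2^k + ∑ l ∈ Finset.range m \ {k}, f l * 2^l :=
    Finset.sum_eq_add_sum_sdiff_singleton_of_mem hmem _
  have hdvd2 : (2:ℤ)^(k+1) ∣ ∑ l ∈ Finset.range m \ {k}, f l * 2^l := by
    apply Finset.dvd_sum
    intro l hl
    simp only [Finset.mem_sdiff, Finset.mem_range, Finset.mem_singleton] at hl
    by_cases h : l < k
    · rw [h0 l h]; simp
    · have hkl : k + 1 ≤ l := lt_of_le_of_ne (not_lt.mp h) (Ne.symm hl.2)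
      exact dvd_mul_of_dvd_right (pow_dvd_pow 2 hkl) _
  have hSne : S ≠ 0 := by
    intro h
    obtain ⟨t, ht⟩ := hdvd2
    have hfk : f k = 1 ∨ f k = -1 := by rcases hf k with h1|h1|h1 <;> simp_all
    have heq0 : f k * 2^k = -(2^(k+1) * t) := by rw [hsplit, ht] at h; linarith
    have h2k : (2:ℤ)^k ≠ 0 := by positivity
    have heq : f k * 2^k = (-2*t) * 2^k := by rw [pow_succ] at heq0; linarith
    have hfk2 : f k = -2 * t := mul_right_cancel₀ h2k heq
    rcases hfk with h1|h1 <;> omega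
  have habs : (2:ℤ)^k ≤ |S| :=
    Int.le_of_dvd (abs_pos.mpr hSne) ((dvd_abs _ _).mpr hdvd)
  calc ((2:ℤ)^k)^2 ≤ |S|^2 := by
        apply pow_le_pow_left₀ (by positivity) habs
      _ = S^2 := sq_abs S

/-- fixing the first `n` bits of the set-partitioned `2^(2m)`-QAM mapping
yields a subset whose minimum squared Euclidean distance is at least `2^(n+2)`. -/
theorem qam_set_partitioning_min_dist (m : ℕ) (hm : 1 ≤ m) (n : ℕ) (hn : n ≤ 2*m)
    (c c' : ℕ → Bool)
    (hne : ∃ i, i < 2*m ∧ c i ≠ c' i)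
    (hpre : ∀ i, i < n → c i = c' i) :
    (qamI m c - qamI m c')^2 + (qamQ m c - qamQ m c')^2 ≥ 2^(n+2) := by
  classical
  have hIdiff : qamI m c - qamI m c' = 2 * ∑ l ∈ Finset.range m, qdI c c' l * 2^l := by
    unfold qamI
    rw [Finset.mul_sum, ← Finset.sum_sub_distrib]
    exact Finset.sum_congr rfl (fun l _ => by unfold qdI; ring)
  have hQdiff : qamQ m c - qamQ m c' = 2 * ∑ l ∈ Finset.range m, qdQ c c' l * 2^l := by
    unfold qamQ
    rw [Finset.mul_sum, ← Finset.sum_sub_distrib]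
    exact Finset.sum_congr rfl (fun l _ => by unfold qdQ; ring)
  have hfIval : ∀ l, qdI c c' l = 1 ∨ qdI c c' l = 0 ∨ qdI c c' l = -1 := by
    intro l; unfold qdI
    cases (Bool.xor (c (2*l)) (c (2*l+1))) <;>
      cases (Bool.xor (c' (2*l)) (c' (2*l+1))) <;> simp
  have hfQval : ∀ l, qdQ c c' l = 1 ∨ qdQ c c' l = 0 ∨ qdQ c c' l = -1 := by
    intro l; unfold qdQ
    cases (c (2*l+1)) <;> cases (c' (2*l+1)) <;> simp
  obtain ⟨i0, hi0, hci0⟩ := hne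
  have H : ∃ i, c i ≠ c' i := ⟨i0, hci0⟩
  set j := Nat.find H with hjdef
  have hjspec : c j ≠ c' j := Nat.find_spec H
  have hjmin : ∀ i, i < j → c i = c' i := fun i hi => not_not.mp (Nat.find_min H hi)
  have hjlt : j < 2*m := lt_of_le_of_lt (Nat.find_min' H hci0) hi0
  have hnj : n ≤ j := by
    by_contra h
    exact hjspec (hpre j (not_le.mp h))
  have main : (2:ℤ)^(j+2) ≤ (qamI m c - qamI m c')^2 + (qamQ m c - qamQ m c')^2 := by
    rcases Nat.even_or_odd j with ⟨k, hk⟩ | ⟨k, hk⟩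
    · -- j = 2k
      have hk2 : j = 2*k := by omega
      have hkm : k < m := by omega
      have hexp : (2:ℤ)^(j+2) = 4*((2:ℤ)^k)^2 := by
        rw [hk2, show 2*k+2 = (k*2)+2 by ring, pow_add, pow_mul]; ring
      by_cases hb : c (2*k+1) = c' (2*k+1)
      · -- use I component
        have ha : c (2*k) ≠ c' (2*k) := by rw [← hk2]; exact hjspec
        have hkne : qdI c c' k ≠ 0 := by
          apply ite_sub_ne
          rw [hb]
          revert ha
          cases (c (2*k)) <;> cases (c' (2*k)) <;> cases (c' (2*k+1)) <;> simp
        have h0 : ∀ l, l < k → qdI c c' l = 0 := by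
          intro l hl
          have h1 : c (2*l) = c' (2*l) := hjmin _ (by omega)
          have h2 : c (2*l+1) = c' (2*l+1) := hjmin _ (by omega)
          unfold qdI; rw [h1, h2]; ring
        have hI := key_sq m k hkm _ hfIval h0 hkne
        rw [hIdiff, hQdiff, hexp]
        nlinarith [hI, sq_nonneg (∑ l ∈ Finset.range m, qdQ c c' l * 2^l)]
      · -- use Q component
        have hkne : qdQ c c' k ≠ 0 := ite_sub_ne _ _ hb
        have h0 : ∀ l, l < k → qdQ c c' l = 0 := by
          intro l hl
          have h2 : c (2*l+1) = c' (2*l+1) := hjmin _ (by omega)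
          unfold qdQ; rw [h2]; ring
        have hQ := key_sq m k hkm _ hfQval h0 hkne
        rw [hIdiff, hQdiff, hexp]
        nlinarith [hQ, sq_nonneg (∑ l ∈ Finset.range m, qdI c c' l * 2^l)]
    · -- j = 2k+1
      have hk2 : j = 2*k+1 := by omega
      have hkm : k < m := by omega
      have hexp : (2:ℤ)^(j+2) = 8*((2:ℤ)^k)^2 := by
        rw [hk2, show 2*k+1+2 = (k*2)+3 by ring, pow_add, pow_mul]; ring
      have ha : c (2*k) = c' (2*k) := hjmin _ (by omega)
      have hb : c (2*k+1) ≠ c' (2*k+1) := by rw [← hk2]; exact hjspec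
      have hkneQ : qdQ c c' k ≠ 0 := ite_sub_ne _ _ hb
      have hkneI : qdI c c' k ≠ 0 := by
        apply ite_sub_ne
        rw [ha]
        revert hb
        cases (c (2*k+1)) <;> cases (c' (2*k+1)) <;> cases (c' (2*k)) <;> simp
      have h0I : ∀ l, l < k → qdI c c' l = 0 := by
        intro l hl
        have h1 : c (2*l) = c' (2*l) := hjmin _ (by omega)
        have h2 : c (2*l+1) = c' (2*l+1) := hjmin _ (by omega)
        unfold qdI; rw [h1, h2]; ring
      have h0Q : ∀ l, l < k → qdQ c c' l = 0 := by
        intro l hl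
        have h2 : c (2*l+1) = c' (2*l+1) := hjmin _ (by omega)
        unfold qdQ; rw [h2]; ring
      have hI := key_sq m k hkm _ hfIval h0I hkneI
      have hQ := key_sq m k hkm _ hfQval h0Q hkneQ
      rw [hIdiff, hQdiff, hexp]
      nlinarith [hI, hQ]
  have hmono : (2:ℤ)^(n+2) ≤ 2^(j+2) :=
    pow_le_pow_right₀ (by norm_num) (by omega)
  linarith [main]
end

section
/- Let B = 2m with m ≥ 1 an integer, and let SM : {0,1}^{2m} → ℤ × ℤ be the set-partitioned QAM mapping SM(c) = (Σ_{k=1}^{m} (2(c_{2k−1} ⊕ c_{2k}) − 1)·2^{k−1}, Σ_{k=1}^{m} (2c_{2k} − 1)·2^{k−1}). Then for every integer n with 0 ≤ n < 2m there exist distinct bit strings c, c' ∈ {0,1}^{2m} with c_i = c'_i for all 1 ≤ i ≤ n such that the squared Euclidean distance between SM(c) and SM(c') is exactly 2^{n+2}. (Together with the lower bound, the minimum squared intra-subset distance at partition level n equals 2^{n+2}.) -/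
/-- the intra-subset minimum squared distance `2^(n+2)` is attained:
for each level `n < 2m` there are distinct bit strings agreeing on the first `n` bits
whose images are at squared distance exactly `2^(n+2)`. -/
theorem qam_set_partitioning_dist_attained (m : ℕ) (hm : 1 ≤ m) (n : ℕ) (hn : n < 2*m) :
    ∃ c c' : ℕ → Bool,
      (∃ i, i < 2*m ∧ c i ≠ c' i) ∧
      (∀ i, i < n → c i = c' i) ∧
      (qamI m c - qamI m c')^2 + (qamQ m c - qamQ m c')^2 = 2^(n+2) := by
  refine ⟨fun _ => false, fun i => decide (i = n), ⟨n, hn, by simp⟩, ?_, ?_⟩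
  · intro i hi
    simp [Nat.ne_of_lt hi]
  · rcases Nat.even_or_odd n with ⟨k, hk⟩ | ⟨k, hk⟩
    · -- n = k + k, flip bit 2k: only I changes
      have hkm : k < m := by omega
      have hI : qamI m (fun _ => false) - qamI m (fun i => decide (i = n)) = -2^(k+1) := by
        rw [qamI, qamI, ← Finset.sum_sub_distrib]
        rw [Finset.sum_eq_single k]
        · have h1 : (2*k = n) := by omega
          have h2 : ¬(2*k+1 = n) := by omega
          simp [h1, h2]; ring
        · intro l _ hl
          have h1 : ¬(2*l = n) := by omega
          have h2 : ¬(2*l+1 = n) := by omega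
          simp [h1, h2]
        · intro h; exact absurd (Finset.mem_range.mpr hkm) h
      have hQ : qamQ m (fun _ => false) - qamQ m (fun i => decide (i = n)) = 0 := by
        rw [qamQ, qamQ, ← Finset.sum_sub_distrib]
        apply Finset.sum_eq_zero
        intro l _
        have h2 : ¬(2*l+1 = n) := by omega
        simp [h2]
      rw [hI, hQ]
      have : n + 2 = 2*(k+1) := by omega
      rw [this]
      ring
    · -- n = 2k+1, flip bit 2k+1: both I and Q change
      have hkm : k < m := by omega
      have hI : qamI m (fun _ => false) - qamI m (fun i => decide (i = n)) = -2^(k+1) := by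
        rw [qamI, qamI, ← Finset.sum_sub_distrib]
        rw [Finset.sum_eq_single k]
        · have h1 : ¬(2*k = n) := by omega
          have h2 : (2*k+1 = n) := by omega
          simp [h1, h2]; ring
        · intro l _ hl
          have h1 : ¬(2*l = n) := by omega
          have h2 : ¬(2*l+1 = n) := by omega
          simp [h1, h2]
        · intro h; exact absurd (Finset.mem_range.mpr hkm) h
      have hQ : qamQ m (fun _ => false) - qamQ m (fun i => decide (i = n)) = -2^(k+1) := by
        rw [qamQ, qamQ, ← Finset.sum_sub_distrib]
        rw [Finset.sum_eq_single k]
        · have h2 : (2*k+1 = n) := by omega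
          simp [h2]; ring
        · intro l _ hl
          have h2 : ¬(2*l+1 = n) := by omega
          simp [h2]
        · intro h; exact absurd (Finset.mem_range.mpr hkm) h
      rw [hI, hQ]
      have : n + 2 = 2*(k+1) + 1 := by omega
      rw [this]
      ring
end

section
/- Let m ≥ 1 be an integer and let SM : {0,1}^{2m} → ℤ × ℤ be the set-partitioned QAM mapping SM(c) = (Σ_{k=1}^{m} (2(c_{2k−1} ⊕ c_{2k}) − 1)·2^{k−1}, Σ_{k=1}^{m} (2c_{2k} − 1)·2^{k−1}). Fix an even partition level n = 2t with 0 ≤ t ≤ m. Then for any two prefixes p, p' ∈ {0,1}^{n}, the difference SM(p ⧺ s) − SM(p' ⧺ s) ∈ ℤ × ℤ does not depend on the suffix s ∈ {0,1}^{2m−n} (where p ⧺ s denotes the bit string whose first n bits are p and whose last 2m − n bits are s). Consequently, any two level-n subsets of the set-partitioned constellation (obtained by fixing the first n bits) are translates of one another, so all subsets at level n have the same Euclidean distance spectrum. -/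
/-- Concatenation of a prefix `p` (first `n` bits) with a suffix `s`. -/
def qamConcat (n : ℕ) (p s : ℕ → Bool) : ℕ → Bool :=
  fun i => if i < n then p i else s (i - n)

/-- at an even partition level `n = 2t`, the difference
`SM(p ⧺ s) − SM(p' ⧺ s)` between points with the same suffix does not depend on the
suffix; hence any two level-`n` subsets are translates of one another. -/
theorem qam_level_subsets_translates (m t : ℕ) (hm : 1 ≤ m) (ht : t ≤ m)
    (p p' s s' : ℕ → Bool) :
    (qamI m (qamConcat (2*t) p s) - qamI m (qamConcat (2*t) p' s),
     qamQ m (qamConcat (2*t) p s) - qamQ m (qamConcat (2*t) p' s)) =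
    (qamI m (qamConcat (2*t) p s') - qamI m (qamConcat (2*t) p' s'),
     qamQ m (qamConcat (2*t) p s') - qamQ m (qamConcat (2*t) p' s')) := by
  have key : ∀ (g : ℕ → Bool → Bool → ℤ) (s s' : ℕ → Bool),
      (∑ k ∈ Finset.range m, g k (qamConcat (2*t) p s (2*k)) (qamConcat (2*t) p s (2*k+1))) -
      (∑ k ∈ Finset.range m, g k (qamConcat (2*t) p' s (2*k)) (qamConcat (2*t) p' s (2*k+1))) =
      (∑ k ∈ Finset.range m, g k (qamConcat (2*t) p s' (2*k)) (qamConcat (2*t) p s' (2*k+1))) -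
      (∑ k ∈ Finset.range m, g k (qamConcat (2*t) p' s' (2*k)) (qamConcat (2*t) p' s' (2*k+1))) := by
    intro g s s'
    rw [← Finset.sum_sub_distrib, ← Finset.sum_sub_distrib]
    apply Finset.sum_congr rfl
    intro k _
    by_cases h : k < t
    · have h1 : 2*k < 2*t := by omega
      have h2 : 2*k+1 < 2*t := by omega
      simp [qamConcat, h1, h2]
    · have h1 : ¬ (2*k < 2*t) := by omega
      have h2 : ¬ (2*k+1 < 2*t) := by omega
      simp [qamConcat, h1, h2]
  simp only [Prod.mk.injEq, qamI, qamQ]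
  exact ⟨key (fun k a b => (2 * (if Bool.xor a b then (1:ℤ) else 0) - 1) * 2^k) s s',
         key (fun k _ b => (2 * (if b then (1:ℤ) else 0) - 1) * 2^k) s s'⟩
end

section
/- (Proposition 1, max-log LLR of a set-partitioned PAM level.) Let M ≥ 2 be an integer, x_0 ∈ ℝ, Δ > 0, and set x_d = x_0 + dΔ for d = 0, 1, …, M−1; label the point x_d with bit value d mod 2, so that X⁰ = {x_d : d even} and X¹ = {x_d : d odd}. Let N₀ > 0. Fix an integer d with 0 ≤ d ≤ M−2 and let y ∈ ℝ satisfy (d = 0 or x_d < y) and (d = M−2 or y ≤ x_{d+1}) (that is, y lies in the cell Ω_d, where the first cell extends to −∞ and the last to +∞). Then (1/N₀)·( − min_{0 ≤ d' ≤ M−1, d' even} (y − x_{d'})² + min_{0 ≤ d' ≤ M−1, d' odd} (y − x_{d'})² ) = (1/N₀)·(−1)^d·(x_{d+1} − x_d)·(x_{d+1} + x_d − 2y). -/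
lemma pam_inf_key (M : ℕ) (hM : 2 ≤ M) (x0 Δ : ℝ) (hΔ : 0 < Δ)
    (d : ℕ) (hd : d ≤ M - 2) (y : ℝ)
    (hy1 : d = 0 ∨ x0 + (d : ℝ) * Δ < y)
    (hy2 : d = M - 2 ∨ y ≤ x0 + ((d : ℝ) + 1) * Δ)
    (c : ℕ) (hc : c = d ∨ c = d + 1) :
    sInf {z : ℝ | ∃ d' : ℕ, d' < M ∧ d' % 2 = c % 2 ∧ z = (y - (x0 + (d' : ℝ) * Δ))^2}
      = (y - (x0 + (c : ℝ) * Δ))^2 := by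
  apply IsLeast.csInf_eq
  constructor
  · exact ⟨c, by omega, rfl, rfl⟩
  · rintro z ⟨d', hd'M, hpar, rfl⟩
    rcases lt_trichotomy d' c with h | h | h
    · -- d' + 2 ≤ c, so d ≥ 1
      have h2 : d' + 2 ≤ c := by omega
      have hd0 : d ≠ 0 := by omega
      have hy := hy1.resolve_left hd0
      have h2' : (d' : ℝ) + 2 ≤ c := by exact_mod_cast h2
      have hcd : (c : ℝ) ≤ d + 1 := by
        have : c ≤ d + 1 := by omega
        exact_mod_cast this
      have p1 : (d':ℝ)*Δ + 2*Δ ≤ (c:ℝ)*Δ := by nlinarith [mul_le_mul_of_nonneg_right h2' hΔ.le]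
      have p2 : (c:ℝ)*Δ ≤ (d:ℝ)*Δ + Δ := by nlinarith [mul_le_mul_of_nonneg_right hcd hΔ.le]
      exact sq_le_sq' (by linarith) (by linarith)
    · subst h; exact le_rfl
    · have h2 : c + 2 ≤ d' := by omega
      have hdM : d ≠ M - 2 := by omega
      have hy := hy2.resolve_left hdM
      have h2' : (c : ℝ) + 2 ≤ d' := by exact_mod_cast h2
      have hcd : (d : ℝ) ≤ c := by
        have : d ≤ c := by omega
        exact_mod_cast this
      have p1 : (c:ℝ)*Δ + 2*Δ ≤ (d':ℝ)*Δ := by nlinarith [mul_le_mul_of_nonneg_right h2' hΔ.le]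
      have p2 : (d:ℝ)*Δ ≤ (c:ℝ)*Δ := by nlinarith [mul_le_mul_of_nonneg_right hcd hΔ.le]
      rw [show (y - (x0 + (d':ℝ)*Δ))^2 = (-(y - (x0 + (d':ℝ)*Δ)))^2 by ring]
      exact sq_le_sq' (by linarith) (by linarith)

/-- Proposition 1: max-log LLR of a set-partitioned PAM level.
The points are `x_d = x0 + d·Δ` for `d = 0, …, M−1`, labeled by `d mod 2`.
If `y` lies in the cell `Ω_d` (the interval `(x_d, x_{d+1}]`, with the first cell
extending to `−∞` and the last to `+∞`), then the max-log LLR equals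
`(1/N₀)·(−1)^d·(x_{d+1} − x_d)·(x_{d+1} + x_d − 2y)`. -/
theorem pam_maxlog_llr (M : ℕ) (hM : 2 ≤ M) (x0 Δ N0 : ℝ) (hΔ : 0 < Δ) (hN0 : 0 < N0)
    (d : ℕ) (hd : d ≤ M - 2) (y : ℝ)
    (hy1 : d = 0 ∨ x0 + (d : ℝ) * Δ < y)
    (hy2 : d = M - 2 ∨ y ≤ x0 + ((d : ℝ) + 1) * Δ) :
    (1/N0) *
      (- sInf {z : ℝ | ∃ d' : ℕ, d' < M ∧ d' % 2 = 0 ∧ z = (y - (x0 + (d' : ℝ) * Δ))^2}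
       + sInf {z : ℝ | ∃ d' : ℕ, d' < M ∧ d' % 2 = 1 ∧ z = (y - (x0 + (d' : ℝ) * Δ))^2})
    = (1/N0) * (-1)^d * ((x0 + ((d : ℝ) + 1) * Δ) - (x0 + (d : ℝ) * Δ)) *
        ((x0 + ((d : ℝ) + 1) * Δ) + (x0 + (d : ℝ) * Δ) - 2*y) := by
  rcases Nat.even_or_odd d with he | ho
  · have h0 : d % 2 = 0 := Nat.even_iff.mp he
    have hinf0 := pam_inf_key M hM x0 Δ hΔ d hd y hy1 hy2 d (Or.inl rfl)
    have hinf1 := pam_inf_key M hM x0 Δ hΔ d hd y hy1 hy2 (d+1) (Or.inr rfl)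
    rw [h0] at hinf0
    have h1 : (d + 1) % 2 = 1 := by omega
    rw [h1] at hinf1
    rw [hinf0, hinf1, he.neg_one_pow]
    push_cast
    ring
  · have h1 : d % 2 = 1 := Nat.odd_iff.mp ho
    have hinf1 := pam_inf_key M hM x0 Δ hΔ d hd y hy1 hy2 d (Or.inl rfl)
    have hinf0 := pam_inf_key M hM x0 Δ hΔ d hd y hy1 hy2 (d+1) (Or.inr rfl)
    rw [h1] at hinf1
    have h0 : (d + 1) % 2 = 0 := by omega
    rw [h0] at hinf0
    rw [hinf0, hinf1, ho.neg_one_pow]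
    push_cast
    ring
end

section
/- (Proposition 3, unimodality of the throughput.) Let N and B be positive reals, let v : ℕ → ℝ satisfy 0 < v_i < 1 for every i and be nondecreasing (v_i ≤ v_{i+1} for all i, the bit-channel error rates sorted in increasing order), and define η_K = (K/(N·B))·Π_{i=1}^{K} (1 − v_i) for integers K ≥ 0. Then η is unimodal as a function of K: there exists an integer K* ≥ 0 such that η_{K+1} > η_K for every K < K* and η_{K+1} ≤ η_K for every K ≥ K*. In particular η attains its maximum at K = K*. -/
/-- The non-combining throughput `η_K = (K/(N·B))·Π_{i=1}^{K} (1 − v_i)`. -/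
noncomputable def ncThroughput (N B : ℝ) (v : ℕ → ℝ) (K : ℕ) : ℝ :=
  ((K : ℝ)/(N*B)) * ∏ i ∈ Finset.range K, (1 - v (i+1))

/-- Proposition 3: with bit error rates `0 < v_i < 1` sorted in
nondecreasing order, the throughput is unimodal in `K`: it strictly increases up to
some `K*` and is nonincreasing afterwards, so it attains its maximum at `K*`. -/
theorem throughput_unimodal (N B : ℝ) (hN : 0 < N) (hB : 0 < B)
    (v : ℕ → ℝ) (hv : ∀ i, 0 < v i ∧ v i < 1) (hmono : ∀ i, v i ≤ v (i+1)) :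
    ∃ Kstar : ℕ,
      (∀ K, K < Kstar → ncThroughput N B v K < ncThroughput N B v (K+1)) ∧
      (∀ K, Kstar ≤ K → ncThroughput N B v (K+1) ≤ ncThroughput N B v K) ∧
      (∀ K, ncThroughput N B v K ≤ ncThroughput N B v Kstar) := by
  classical
  have hNB : 0 < N * B := mul_pos hN hB
  have hP : ∀ K : ℕ, 0 < ∏ i ∈ Finset.range K, (1 - v (i+1)) := by
    intro K
    exact Finset.prod_pos fun i _ => by linarith [(hv (i+1)).2]
  have hmono' : Monotone v := monotone_nat_of_le_succ hmono
  have hdiff : ∀ K : ℕ, ncThroughput N B v (K+1) - ncThroughput N B v K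
      = (∏ i ∈ Finset.range K, (1 - v (i+1)))/(N*B) * (1 - ((K:ℝ)+1) * v (K+1)) := by
    intro K
    simp only [ncThroughput, Finset.prod_range_succ]
    push_cast
    field_simp
    ring
  -- predicate: at step K the throughput stops increasing
  have hex : ∃ K : ℕ, 1 ≤ ((K:ℝ)+1) * v (K+1) := by
    obtain ⟨M, hM⟩ := Archimedean.arch (1:ℝ) (hv 1).1
    refine ⟨M, ?_⟩
    have h1 : v 1 ≤ v (M+1) := hmono' (Nat.le_add_left 1 M)
    have h2 : (M:ℝ) * v 1 ≤ ((M:ℝ)+1) * v (M+1) := by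
      have := (hv 1).1
      nlinarith
    calc (1:ℝ) ≤ M • v 1 := hM
      _ = (M:ℝ) * v 1 := by simp [nsmul_eq_mul]
      _ ≤ _ := h2
  set Kstar := Nat.find hex with hKdef
  have hspec : 1 ≤ ((Kstar:ℝ)+1) * v (Kstar+1) := Nat.find_spec hex
  have hinc : ∀ K, K < Kstar → ncThroughput N B v K < ncThroughput N B v (K+1) := by
    intro K hK
    have hlt : ((K:ℝ)+1) * v (K+1) < 1 := by
      have := Nat.find_min hex hK
      push_neg at this
      exact this
    have := hdiff K
    nlinarith [hP K, div_pos (hP K) hNB]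
  have hdec : ∀ K, Kstar ≤ K → ncThroughput N B v (K+1) ≤ ncThroughput N B v K := by
    intro K hK
    have h1 : v (Kstar+1) ≤ v (K+1) := hmono' (by omega)
    have h2 : ((Kstar:ℝ)+1) ≤ (K:ℝ)+1 := by exact_mod_cast by omega
    have h3 : 1 ≤ ((K:ℝ)+1) * v (K+1) := by
      calc (1:ℝ) ≤ ((Kstar:ℝ)+1) * v (Kstar+1) := hspec
        _ ≤ ((K:ℝ)+1) * v (K+1) := by
          have := (hv (Kstar+1)).1
          nlinarith
    have := hdiff K
    nlinarith [div_pos (hP K) hNB]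
  refine ⟨Kstar, hinc, hdec, ?_⟩
  intro K
  rcases le_total K Kstar with h | h
  · -- climb up from K to Kstar
    have key : ∀ d K', K' + d = Kstar → ncThroughput N B v K' ≤ ncThroughput N B v Kstar := by
      intro d
      induction d with
      | zero => intro K' hK'; simp at hK'; rw [hK']
      | succ d ih =>
        intro K' hK'
        have h1 : K' < Kstar := by omega
        have h2 := ih (K'+1) (by omega)
        exact le_trans (hinc K' h1).le h2
    exact key (Kstar - K) K (by omega)
  · -- descend from Kstar to K
    have key : ∀ d, ncThroughput N B v (Kstar + d) ≤ ncThroughput N B v Kstar := by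
      intro d
      induction d with
      | zero => simp
      | succ d ih =>
        have := hdec (Kstar + d) (by omega)
        calc ncThroughput N B v (Kstar + (d+1)) = ncThroughput N B v ((Kstar + d) + 1) := by
              ring_nf
          _ ≤ ncThroughput N B v (Kstar + d) := this
          _ ≤ _ := ih
    have := key (K - Kstar)
    rwa [Nat.add_sub_cancel' h] at this
end
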